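/- Let A be a set, let m, k, ℓ ≥ 1 be integers, and let t_0,…,t_{k+1} : A^{m+2} → A be operations satisfying the Jónsson-type condition (B). Let α, β, γ be congruences with respect to the operations t_0,…,t_{k+1}. Then α ∩ (β ∘_{mℓ+1} γ) ⊆ (α ∩ β) ∘_{kℓ+1} (α ∩ γ). -/

import Mathlib

/-- Relational composition: `a (Comp R S) c` iff there is `b` with `a R b` and `b S c`. -/
def Comp {A : Type*} (R S : A → A → Prop) : A → A → Prop :=
  fun a c => ∃ b, R a b ∧ S b c

/-- `AltComp R S m` is the alternating composition `R ∘ S ∘ R ∘ ⋯` with exactly `m` factors. -/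
def AltComp {A : Type*} : (R S : A → A → Prop) → ℕ → A → A → Prop
  | _, _, 0 => Eq
  | R, _, 1 => R
  | R, S, (n+2) => Comp R (AltComp S R (n+1))

/-- Converse relation. -/
def Conv {A : Type*} (R : A → A → Prop) : A → A → Prop := fun a b => R b a

/-- Intersection of relations. -/
def InterRel {A : Type*} (R S : A → A → Prop) : A → A → Prop := fun a b => R a b ∧ S a b

/-- `RelPow R n` is `R ∘ R ∘ ⋯ ∘ R` with `n` factors. -/
def RelPow {A : Type*} (R : A → A → Prop) : ℕ → A → A → Prop
  | 0 => Eq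
  | 1 => R
  | n+2 => Comp R (RelPow R (n+1))

/-- Compatibility of a relation with a ternary operation. -/
def Compat3 {A : Type*} (f : A → A → A → A) (R : A → A → Prop) : Prop :=
  ∀ a a' b b' c c', R a a' → R b b' → R c c' → R (f a b c) (f a' b' c')

/-- Compatibility of a relation with an `n`-ary operation. -/
def CompatV {A : Type*} {n : ℕ} (f : (Fin n → A) → A) (R : A → A → Prop) : Prop :=
  ∀ a b : Fin n → A, (∀ i, R (a i) (b i)) → R (f a) (f b)

/-- Composition `S 0 ∘ S 1 ∘ ⋯ ∘ S (n-1)` of a family of `n` relations. -/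
def FamComp {A : Type*} : (n : ℕ) → (Fin n → A → A → Prop) → A → A → Prop
  | 0, _ => Eq
  | 1, S => S 0
  | n+2, S => Comp (S 0) (FamComp (n+1) (fun i => S i.succ))

/-- The substitution `x_0, x_0, x_2, x_2, x_4, x_4, …` (arguments identified in
consecutive pairs starting from the first two). -/
def EvenPair {A : Type*} (m : ℕ) (x : Fin (m+2) → A) : Fin (m+2) → A :=
  fun j => x ⟨2 * (j.val / 2), by have := j.isLt; omega⟩

/-- The substitution `x_0, x_1, x_1, x_3, x_3, …` (arguments identified in
consecutive pairs starting from the second and third). -/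
def OddPair {A : Type*} (m : ℕ) (x : Fin (m+2) → A) : Fin (m+2) → A :=
  fun j => x ⟨2 * ((j.val + 1) / 2) - 1, by have := j.isLt; omega⟩

/-!
Fix a chain `a = c₀ β c₁ γ c₂ ⋯ c_{mℓ+1} = c` and cut it into `m` consecutive segments, the
`j`-th of length `ℓ` and the last of length `ℓ + 1`. Tuples in `A^{m+2}` are read off the chain:
coordinates `0` and `m + 1` stay at `a` and `c`, coordinate `j ∈ [1, m]` lives on segment `j`.
In slide `q < k` the coordinates with `q + j` odd sweep their segment upwards and the others
downwards, in `ℓ + 1` moves; within one move every coordinate crosses at most one link of the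
chain, and all links crossed have the parity of the move, so by compatibility `t_{q+1}` turns
the moves into alternating `β`/`γ` steps. Between slides the tuple has the paired shape of (B3),
so `t_{q+1}` and `t_{q+2}` agree on it: the last move of a slide merges with the first move of
the next, giving `k (ℓ + 1) - (k - 1) = kℓ + 1` steps, and (B1), (B4) identify the endpoints
with `a` and `c`. Every element of the new chain is `α`-related to `a` by (B2), as `a α c`.
-/

section Relations

variable {A : Type*}

def AltStep (R S : A → A → Prop) (n : ℕ) : A → A → Prop :=
  if n % 2 = 0 then R else S

variable {R S : A → A → Prop}

lemma altStep_congr {n n' : ℕ} (h : n % 2 = n' % 2) : AltStep R S n = AltStep R S n' := by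
  simp only [AltStep, h]

lemma altStep_succ (n : ℕ) : AltStep R S (n + 1) = AltStep S R n := by
  unfold AltStep; split_ifs <;> first | rfl | omega

lemma altStep_equivalence (hR : Equivalence R) (hS : Equivalence S) (n : ℕ) :
    Equivalence (AltStep R S n) := by
  unfold AltStep; split_ifs <;> assumption

lemma altStep_isTrans (hR : IsTrans A R) (hS : IsTrans A S) (n : ℕ) :
    IsTrans A (AltStep R S n) := by
  unfold AltStep; split_ifs <;> assumption

lemma altStep_interRel_iff {α : A → A → Prop} {n : ℕ} {x y : A} :
    AltStep (InterRel α R) (InterRel α S) n x y ↔ α x y ∧ AltStep R S n x y := by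
  unfold AltStep; split_ifs <;> rfl

lemma CompatV.altStep {n : ℕ} {f : (Fin n → A) → A} (hR : CompatV f R) (hS : CompatV f S)
    (i : ℕ) : CompatV f (AltStep R S i) := by
  unfold AltStep; split_ifs <;> assumption

lemma altComp_succ_iff {N : ℕ} {a c : A} :
    AltComp R S (N + 1) a c ↔ ∃ b, R a b ∧ AltComp S R N b c := by
  cases N with
  | zero => exact ⟨fun h => ⟨c, h, rfl⟩, fun ⟨_, h, hb⟩ => hb ▸ h⟩
  | succ N => rfl

lemma altComp_iff_exists_chain {N : ℕ} {a c : A} :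
    AltComp R S N a c ↔
      ∃ e : ℕ → A, e 0 = a ∧ e N = c ∧ ∀ n < N, AltStep R S n (e n) (e (n + 1)) := by
  induction N generalizing R S a with
  | zero => exact ⟨fun h => ⟨fun _ => a, rfl, h, by omega⟩, fun ⟨e, h0, hN, _⟩ => h0 ▸ hN⟩
  | succ N ih =>
    simp only [altComp_succ_iff, ih]
    constructor
    · rintro ⟨b, hab, e, rfl, hN, he⟩
      refine ⟨fun | 0 => a | n + 1 => e n, rfl, hN, ?_⟩
      rintro (_ | n) hn
      · simpa [AltStep] using hab
      · simpa [altStep_succ] using he n (by omega)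
    · rintro ⟨e, rfl, hN, he⟩
      refine ⟨e 1, by simpa [AltStep] using he 0 (by omega), fun n => e (n + 1), rfl, hN,
        fun n hn => ?_⟩
      simpa [altStep_succ] using he (n + 1) (by omega)

/-- Blocks `F q 0, …, F q (ℓ + 1)` of `ℓ + 1` steps each, glued end to start; at each gluing
point two steps of equal parity merge into one. -/
lemma exists_chain_of_blocks (hR : IsTrans A R) (hS : IsTrans A S) {ℓ : ℕ} (F : ℕ → ℕ → A)
    (hstep : ∀ q u, u ≤ ℓ → AltStep R S (q * ℓ + u) (F q u) (F q (u + 1))) (K : ℕ)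
    (hglue : ∀ q < K, F q (ℓ + 1) = F (q + 1) 0) :
    ∃ e : ℕ → A, e 0 = F 0 0 ∧ e ((K + 1) * ℓ + 1) = F K (ℓ + 1) ∧
      ∀ n < (K + 1) * ℓ + 1, AltStep R S n (e n) (e (n + 1)) := by
  induction K with
  | zero => exact ⟨F 0, rfl, by simp, fun n hn => by simpa using hstep 0 n (by omega)⟩
  | succ K ih =>
    obtain ⟨e, h0, hK, he⟩ := ih fun q hq => hglue q (by omega)
    set L := (K + 1) * ℓ
    have hL : (K + 1 + 1) * ℓ = L + ℓ := add_one_mul _ _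
    refine ⟨fun n => if n ≤ L then e n else F (K + 1) (n - L), by simp [h0], ?_, ?_⟩
    · simp only [hL, show ¬L + ℓ + 1 ≤ L by omega, if_false]
      congr 1; omega
    intro n hn
    rcases lt_trichotomy n L with hlt | hnL | hgt
    · simpa [hlt.le, Nat.succ_le_of_lt hlt] using he n (by omega)
    · have hmerge : AltStep R S n (e (n + 1)) (F (K + 1) 1) := by
        rw [hnL, hK, hglue K (by omega)]
        simpa using hstep (K + 1) 0 (by omega)
      simpa [hnL] using (altStep_isTrans hR hS n).trans _ _ _ (he n (by omega)) hmerge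
    · have h := hstep (K + 1) (n - L) (by omega)
      rw [show L + (n - L) = n by omega, show n - L + 1 = n + 1 - L by omega] at h
      simpa [show ¬n ≤ L by omega, show ¬n + 1 ≤ L by omega] using h

lemma altComp_of_blocks (hR : IsTrans A R) (hS : IsTrans A S) {k ℓ : ℕ} (hk : 1 ≤ k)
    (F : ℕ → ℕ → A) (hstep : ∀ q u, u ≤ ℓ → AltStep R S (q * ℓ + u) (F q u) (F q (u + 1)))
    (hglue : ∀ q, q + 1 < k → F q (ℓ + 1) = F (q + 1) 0) :
    AltComp R S (k * ℓ + 1) (F 0 0) (F (k - 1) (ℓ + 1)) := by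
  obtain ⟨K, rfl⟩ : ∃ K, k = K + 1 := ⟨k - 1, by omega⟩
  exact altComp_iff_exists_chain.2
    (exists_chain_of_blocks hR hS F hstep K fun q hq => hglue q (by omega))

lemma isTrans_interRel (hR : IsTrans A R) (hS : IsTrans A S) :
    IsTrans A (InterRel R S) :=
  ⟨fun _ _ _ h₁ h₂ => ⟨hR.trans _ _ _ h₁.1 h₂.1, hS.trans _ _ _ h₁.2 h₂.2⟩⟩

lemma CompatV.rel_head {n : ℕ} {f : (Fin (n + 2) → A) → A} {R : A → A → Prop}
    (hR : Equivalence R) (hf : CompatV f R)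
    (hfix : ∀ x : Fin (n + 2) → A, x (Fin.last (n + 1)) = x 0 → f x = x 0)
    (x : Fin (n + 2) → A) (hx : R (x (Fin.last (n + 1))) (x 0)) : R (f x) (x 0) := by
  set y := Function.update x (Fin.last (n + 1)) (x 0)
  have hy0 : y 0 = x 0 := Function.update_of_ne (Fin.last_pos.ne) _ _
  have hxy : ∀ j, R (x j) (y j) := by
    intro j
    rcases eq_or_ne j (Fin.last (n + 1)) with rfl | hj
    · simpa [y] using hx
    · simpa [y, hj] using hR.refl (x j)
  simpa [hfix y (by simp [y]), hy0] using hf x y hxy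

end Relations

namespace Slide

variable (m ℓ : ℕ)

/-- Coordinate `j ∈ [1, m]` sweeps the segment `[lo j, hi j]` of the chain `c₀, …, c_{mℓ+1}`;
the segments tile `[0, mℓ + 1]`, and coordinates `0`, `m + 1` are pinned at `0`, `mℓ + 1`
(for `j = 0` the formula gives `(0 - 1) * ℓ = 0`). -/
def lo (j : ℕ) : ℕ := if j ≤ m then (j - 1) * ℓ else m * ℓ + 1

def hi (j : ℕ) : ℕ := if j < m then j * ℓ else m * ℓ + 1

def sweep (j v : ℕ) : ℕ := min (hi m ℓ j) (lo m ℓ j + v)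

def clock (q u j : ℕ) : ℕ := if (q + j) % 2 = 1 then u else ℓ + 1 - u

/-- The chain index of coordinate `j` at time `u ∈ [0, ℓ + 1]` of slide `q`: coordinates with
`q + j` odd sweep their segment upwards, the others downwards. -/
def pos (q u j : ℕ) : ℕ := sweep m ℓ j (clock ℓ q u j)

def tuple {A : Type*} (cc : ℕ → A) (q u : ℕ) : Fin (m + 2) → A := fun j => cc (pos m ℓ q u j)

variable {m ℓ}

lemma hi_eq_lo_succ (j : ℕ) : hi m ℓ j = lo m ℓ (j + 1) := by
  unfold hi lo; split_ifs <;> first | rfl | omega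

lemma lo_le_hi (j : ℕ) : lo m ℓ j ≤ hi m ℓ j := by
  unfold hi lo; split_ifs
  · exact Nat.mul_le_mul_right _ (by omega)
  · have : (j - 1) * ℓ ≤ m * ℓ := Nat.mul_le_mul_right _ (by omega)
    omega
  · omega
  · rfl

lemma hi_le_lo_add (j : ℕ) : hi m ℓ j ≤ lo m ℓ j + (ℓ + 1) := by
  unfold hi lo
  split_ifs
  · have : j * ℓ ≤ (j - 1) * ℓ + ℓ := by rw [Nat.sub_one_mul]; omega
    omega
  · omega
  · obtain rfl : j = m := by omega
    rw [Nat.sub_one_mul]; omega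
  · omega

lemma hi_le (j : ℕ) : hi m ℓ j ≤ m * ℓ + 1 := by
  unfold hi; split_ifs
  · have : j * ℓ ≤ m * ℓ := Nat.mul_le_mul_right _ (by omega)
    omega
  · rfl

lemma sweep_zero (j : ℕ) : sweep m ℓ j 0 = lo m ℓ j := min_eq_right (lo_le_hi j)

lemma sweep_full (j : ℕ) : sweep m ℓ j (ℓ + 1) = hi m ℓ j := min_eq_left (hi_le_lo_add j)

lemma sweep_succ (j v : ℕ) :
    sweep m ℓ j (v + 1) = sweep m ℓ j v ∨
      sweep m ℓ j v = lo m ℓ j + v ∧ sweep m ℓ j (v + 1) = lo m ℓ j + v + 1 ∧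
        lo m ℓ j + v < hi m ℓ j := by
  unfold sweep; omega

lemma lo_eq_of_lt_hi (hm : 0 < m) {j v : ℕ} (h : lo m ℓ j + v < hi m ℓ j) :
    1 ≤ j ∧ lo m ℓ j = (j - 1) * ℓ := by
  unfold hi lo at h
  rcases j with _ | j
  · simp [hm] at h
  · split_ifs at h <;> first | omega | exact ⟨by omega, if_pos (by omega)⟩

lemma pos_full (q j : ℕ) : pos m ℓ q (ℓ + 1) j = pos m ℓ (q + 1) 0 j := by
  unfold pos clock; congr 1; split_ifs <;> omega

lemma pos_zero_of_odd {q j : ℕ} (hodd : (q + j) % 2 = 1) (hj : 1 ≤ j) :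
    pos m ℓ q 0 j = pos m ℓ q 0 (j - 1) := by
  unfold pos clock
  rw [if_pos hodd, if_neg (by omega), Nat.sub_zero, sweep_zero, sweep_full, hi_eq_lo_succ,
    Nat.sub_add_cancel hj]

section Chain

variable {A : Type*} {β γ : A → A → Prop} {cc : ℕ → A}

lemma tuple_zero (hm : 0 < m) (q u : ℕ) : tuple m ℓ cc q u 0 = cc 0 := by
  simp [tuple, pos, sweep, hi, hm]

lemma tuple_last (q u : ℕ) : tuple m ℓ cc q u (Fin.last (m + 1)) = cc (m * ℓ + 1) := by
  simp [tuple, pos, sweep, hi, lo]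

lemma tuple_full (q : ℕ) : tuple m ℓ cc q (ℓ + 1) = tuple m ℓ cc (q + 1) 0 :=
  funext fun j => congrArg cc (pos_full q j)

lemma altStep_sweep_succ (hβ : Equivalence β) (hγ : Equivalence γ)
    (hcc : ∀ n < m * ℓ + 1, AltStep β γ n (cc n) (cc (n + 1))) {j v s : ℕ}
    (hs : lo m ℓ j + v < hi m ℓ j → (lo m ℓ j + v) % 2 = s % 2) :
    AltStep β γ s (cc (sweep m ℓ j v)) (cc (sweep m ℓ j (v + 1))) := by
  rcases sweep_succ j v with h | ⟨h₁, h₂, hlt⟩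
  · rw [h]; exact (altStep_equivalence hβ hγ s).refl _
  · rw [h₁, h₂, ← altStep_congr (hs hlt)]
    exact hcc _ (hlt.trans_le (hi_le j))

lemma altStep_tuple_succ (hβ : Equivalence β) (hγ : Equivalence γ)
    (hcc : ∀ n < m * ℓ + 1, AltStep β γ n (cc n) (cc (n + 1))) (hm : 0 < m) {q u : ℕ}
    (hu : u ≤ ℓ) (j : Fin (m + 2)) :
    AltStep β γ (q * ℓ + u) (tuple m ℓ cc q u j) (tuple m ℓ cc q (u + 1) j) := by
  unfold tuple pos clock
  split_ifs with hodd
  · refine altStep_sweep_succ hβ hγ hcc fun hlt => ?_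
    obtain ⟨hj, hlo⟩ := lo_eq_of_lt_hi hm hlt
    rw [hlo]
    exact (Nat.ModEq.mul_right ℓ (show j - 1 ≡ q [MOD 2] by unfold Nat.ModEq; omega)).add_right u
  · rw [show ℓ + 1 - u = ℓ - u + 1 by omega, show ℓ + 1 - (u + 1) = ℓ - u by omega]
    refine (altStep_equivalence hβ hγ _).symm (altStep_sweep_succ hβ hγ hcc fun hlt => ?_)
    obtain ⟨hj, hlo⟩ := lo_eq_of_lt_hi hm hlt
    have hpar : j * ℓ ≡ q * ℓ [MOD 2] := Nat.ModEq.mul_right ℓ (by unfold Nat.ModEq; omega)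
    have hsucc : (j - 1) * ℓ + ℓ = j * ℓ := by rw [← add_one_mul, Nat.sub_add_cancel hj]
    unfold Nat.ModEq at hpar
    omega

end Chain

end Slide

section Pairing

variable {A : Type*} {m : ℕ}

lemma evenPair_eq_self (g : ℕ → A) (hg : ∀ j ≤ m + 1, j % 2 = 1 → g j = g (j - 1)) :
    EvenPair m (fun j : Fin (m + 2) => g j) = fun j : Fin (m + 2) => g j := by
  funext j
  simp only [EvenPair]
  rcases Nat.mod_two_eq_zero_or_one j with h | h
  · congr 1; omega
  · rw [hg j (by omega) h]; congr 1; omega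

lemma oddPair_eq_self (g : ℕ → A) (hg : ∀ j ≤ m + 1, 1 ≤ j → j % 2 = 0 → g j = g (j - 1)) :
    OddPair m (fun j : Fin (m + 2) => g j) = fun j : Fin (m + 2) => g j := by
  funext j
  simp only [OddPair]
  rcases Nat.mod_two_eq_zero_or_one j with h | h
  · rcases Nat.eq_zero_or_pos (j : ℕ) with h0 | h0
    · congr 1; omega
    · rw [hg j (by omega) h0 h]; congr 1; omega
  · congr 1; omega

lemma apply_eq_apply_succ_of_paired {k : ℕ} (t : Fin (k + 2) → (Fin (m + 2) → A) → A)
    (hB3even : ∀ (i : ℕ) (hi : i ≤ k), i % 2 = 0 →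
      ∀ x : Fin (m+2) → A, t ⟨i, by omega⟩ (EvenPair m x) = t ⟨i+1, by omega⟩ (EvenPair m x))
    (hB3odd : ∀ (i : ℕ) (hi : i ≤ k), i % 2 = 1 →
      ∀ x : Fin (m+2) → A, t ⟨i, by omega⟩ (OddPair m x) = t ⟨i+1, by omega⟩ (OddPair m x))
    {i : ℕ} (hi : i ≤ k) (g : ℕ → A)
    (hg : ∀ j ≤ m + 1, 1 ≤ j → (i + j) % 2 = 1 → g j = g (j - 1)) :
    t (Fin.ofNat (k + 2) i) (fun j : Fin (m + 2) => g j) =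
      t (Fin.ofNat (k + 2) (i + 1)) (fun j : Fin (m + 2) => g j) := by
  rw [show Fin.ofNat (k + 2) i = ⟨i, by omega⟩ from Fin.ext (Nat.mod_eq_of_lt (by omega)),
    show Fin.ofNat (k + 2) (i + 1) = ⟨i + 1, by omega⟩ from
      Fin.ext (Nat.mod_eq_of_lt (by omega))]
  rcases Nat.mod_two_eq_zero_or_one i with h | h
  · rw [← evenPair_eq_self g fun j hj hodd => hg j hj (by omega) (by omega)]
    exact hB3even i hi h _
  · rw [← oddPair_eq_self g fun j hj hj1 heven => hg j hj hj1 (by omega)]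
    exact hB3odd i hi h _

end Pairing

theorem stmt2 {A : Type*} (m k ℓ : ℕ) (hm : 1 ≤ m) (hk : 1 ≤ k)
    (t : Fin (k+2) → (Fin (m+2) → A) → A)
    (hB1 : ∀ x : Fin (m+2) → A, t 0 x = x 0)
    (hB2 : ∀ (i : Fin (k+2)) (x : Fin (m+2) → A), x (Fin.last (m+1)) = x 0 → t i x = x 0)
    (hB3even : ∀ (i : ℕ) (hi : i ≤ k), i % 2 = 0 →
      ∀ x : Fin (m+2) → A, t ⟨i, by omega⟩ (EvenPair m x) = t ⟨i+1, by omega⟩ (EvenPair m x))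
    (hB3odd : ∀ (i : ℕ) (hi : i ≤ k), i % 2 = 1 →
      ∀ x : Fin (m+2) → A, t ⟨i, by omega⟩ (OddPair m x) = t ⟨i+1, by omega⟩ (OddPair m x))
    (hB4 : ∀ x : Fin (m+2) → A, t (Fin.last (k+1)) x = x (Fin.last (m+1)))
    (α β γ : A → A → Prop)
    (hα : Equivalence α) (hαcompat : ∀ i, CompatV (t i) α)
    (hβ : Equivalence β) (hβcompat : ∀ i, CompatV (t i) β)
    (hγ : Equivalence γ) (hγcompat : ∀ i, CompatV (t i) γ) :
    ∀ a c, InterRel α (AltComp β γ (m * ℓ + 1)) a c →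
      AltComp (InterRel α β) (InterRel α γ) (k * ℓ + 1) a c := by
  rintro a c ⟨hac, hchain⟩
  obtain ⟨cc, rfl, rfl, hcc⟩ := altComp_iff_exists_chain.1 hchain
  set P := Slide.tuple m ℓ cc
  have hP0 (q u : ℕ) : P q u 0 = cc 0 := Slide.tuple_zero hm q u
  have hPlast (q u : ℕ) : P q u (Fin.last (m + 1)) = cc (m * ℓ + 1) := Slide.tuple_last q u
  have hPfull (q : ℕ) : P q (ℓ + 1) = P (q + 1) 0 := Slide.tuple_full q
  have hswitch (i : ℕ) (hi : i ≤ k) :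
      t (Fin.ofNat (k + 2) i) (P i 0) = t (Fin.ofNat (k + 2) (i + 1)) (P i 0) :=
    apply_eq_apply_succ_of_paired t hB3even hB3odd hi _
      fun _ _ hj hodd => congrArg cc (Slide.pos_zero_of_odd hodd hj)
  have hα_start (i : Fin (k + 2)) (q u : ℕ) : α (t i (P q u)) (cc 0) := by
    simpa only [hP0] using (hαcompat i).rel_head hα (hB2 i) (P q u)
      (by rw [hP0, hPlast]; exact hα.symm hac)
  have hstart : t (Fin.ofNat (k + 2) (0 + 1)) (P 0 0) = cc 0 := by
    rw [← hswitch 0 (by omega), show Fin.ofNat (k + 2) 0 = 0 from rfl, hB1, hP0]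
  have hend : t (Fin.ofNat (k + 2) (k - 1 + 1)) (P (k - 1) (ℓ + 1)) = cc (m * ℓ + 1) := by
    rw [hPfull, Nat.sub_add_cancel hk, hswitch k le_rfl,
      show Fin.ofNat (k + 2) (k + 1) = Fin.last (k + 1) by ext; simp, hB4, hPlast]
  have hstep (q u : ℕ) (hu : u ≤ ℓ) :
      AltStep (InterRel α β) (InterRel α γ) (q * ℓ + u)
        (t (Fin.ofNat (k + 2) (q + 1)) (P q u)) (t (Fin.ofNat (k + 2) (q + 1)) (P q (u + 1))) :=
    altStep_interRel_iff.2 ⟨hα.trans (hα_start _ q u) (hα.symm (hα_start _ q (u + 1))),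
      (hβcompat _).altStep (hγcompat _) _ _ _ (Slide.altStep_tuple_succ hβ hγ hcc hm hu)⟩
  have hblocks := altComp_of_blocks (isTrans_interRel hα.isTrans hβ.isTrans)
    (isTrans_interRel hα.isTrans hγ.isTrans) hk _ hstep
    fun q hq => by rw [hPfull]; exact hswitch (q + 1) (by omega)
  rwa [hstart, hend] at hblocks
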